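/- arXiv:1906.04533 — 2 statements merged into one kernel-verified Lean document; each statement's English description precedes it below -/
import Mathlib

section
/- Let k be a positive integer, X, X' ⊆ [k] with X ∪ X_{(k)} = X' ∪ X'_{(k)} and X ∩ X_{(k)} = X' ∩ X'_{(k)}, and let Z ⊆ [k] be disjoint from X ∪ X_{(k)} with Z = Z_{(k)}. Then Δ₁(X' ∪ Z)·Δ₁(X) = Δ₁(X ∪ Z)·Δ₁(X'), where Δ₁(S) = ∏_{s<s' in S}(s'−s). -/
/-!
For disjoint `A`, `Z` we have `Δ₁(A ∪ Z) = Δ₁(A) Δ₁(Z) ∏_{a ∈ A, z ∈ Z} |a - z|`, so it suffices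
that `f x = ∏_{z ∈ Z} |x - z|` has the same product over `X` and over `X'`. Since `Z` is
`k`-symmetric, `f` is invariant under `x ↦ k + 1 - x`, and for such `f` the square of the
product over `X` is determined by `X ∪ X_{(k)}` and `X ∩ X_{(k)}`.
-/

open Finset

/-- `Δ₁(S) = ∏_{s,s' ∈ S, s < s'} (s' - s)`. -/
def Delta1 (S : Finset ℕ) : ℕ :=
  ∏ s ∈ S, ∏ t ∈ S.filter (fun t => s < t), (t - s)

/-- The k-reflection `S_{(k)} = {k+1-s : s ∈ S}` of `S ⊆ [k]`. -/
def kReflect (k : ℕ) (S : Finset ℕ) : Finset ℕ :=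
  S.image (fun s => k + 1 - s)

-- Disjointness gives `a ≠ b`, so every cross pair has exactly one of `a < b`, `b < a`.
lemma prod_filter_lt_sub_eq_prod_dist {A B : Finset ℕ} (h : Disjoint A B) :
    (∏ a ∈ A, ∏ b ∈ B.filter (fun b => a < b), (b - a)) *
        ∏ b ∈ B, ∏ a ∈ A.filter (fun a => b < a), (a - b) =
      ∏ a ∈ A, ∏ b ∈ B, Nat.dist a b := by
  rw [prod_comm' (s := B) (t' := A) (s' := fun a => B.filter (fun b => b < a))
      (by simp only [mem_filter]; tauto),
    ← prod_mul_distrib]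
  refine prod_congr rfl fun a ha => ?_
  rw [← prod_filter_mul_prod_filter_not B (fun b => a < b)]
  have hne : ∀ b ∈ B, a ≠ b := fun b hb hab => disjoint_left.mp h ha (hab ▸ hb)
  congr 1
  · exact prod_congr rfl fun b hb => (Nat.dist_eq_sub_of_le (mem_filter.mp hb).2.le).symm
  · refine (prod_congr ?_ fun b hb => ?_).symm
    · ext b
      simp only [mem_filter, not_lt]
      exact and_congr_right fun hb => ⟨fun hba => hba.lt_of_ne (hne b hb).symm, le_of_lt⟩
    · exact Nat.dist_eq_sub_of_le_right (mem_filter.mp hb).2.le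

lemma Delta1_union {A B : Finset ℕ} (h : Disjoint A B) :
    Delta1 (A ∪ B) = Delta1 A * Delta1 B * ∏ a ∈ A, ∏ b ∈ B, Nat.dist a b := by
  have hsplit : ∀ s, ∏ t ∈ (A ∪ B).filter (fun t => s < t), (t - s) =
      (∏ t ∈ A.filter (fun t => s < t), (t - s)) * ∏ t ∈ B.filter (fun t => s < t), (t - s) :=
    fun s => by rw [filter_union, prod_union (disjoint_filter_filter h)]
  rw [← prod_filter_lt_sub_eq_prod_dist h]
  simp only [Delta1, prod_union h, hsplit, prod_mul_distrib]
  ring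

lemma Nat.dist_sub_sub {n a b : ℕ} (ha : a ≤ n) (hb : b ≤ n) :
    Nat.dist (n - a) (n - b) = Nat.dist a b := by
  unfold Nat.dist; omega

section Reflection

variable {k : ℕ}

lemma prod_kReflect {M : Type*} [CommMonoid M] {S : Finset ℕ} (hS : S ⊆ Icc 1 k) (f : ℕ → M) :
    ∏ x ∈ kReflect k S, f x = ∏ x ∈ S, f (k + 1 - x) :=
  prod_image fun a ha b hb hab => by
    have := hS ha; have := hS hb; simp only [mem_Icc] at *; omega

/-- Both `(∏_X f)²` and `(∏_{X'} f)²` equal `∏_{X ∪ X_{(k)}} f · ∏_{X ∩ X_{(k)}} f`. -/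
lemma prod_eq_prod_of_shuffle {f : ℕ → ℕ} (hf : ∀ x ∈ Icc 1 k, f (k + 1 - x) = f x)
    {X X' : Finset ℕ} (hX : X ⊆ Icc 1 k) (hX' : X' ⊆ Icc 1 k)
    (hU : X ∪ kReflect k X = X' ∪ kReflect k X')
    (hI : X ∩ kReflect k X = X' ∩ kReflect k X') :
    ∏ x ∈ X, f x = ∏ x ∈ X', f x := by
  have hsq : ∀ S ⊆ Icc 1 k, (∏ x ∈ S ∪ kReflect k S, f x) * ∏ x ∈ S ∩ kReflect k S, f x =
      (∏ x ∈ S, f x) * ∏ x ∈ S, f x := fun S hS => by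
    rw [prod_union_inter, prod_kReflect hS]
    exact congrArg _ (prod_congr rfl fun x hx => hf x (hS hx))
  exact Nat.mul_self_inj.mp ((hsq X hX).symm.trans (hU ▸ hI ▸ hsq X' hX'))

lemma prod_dist_reflect_of_kReflect_eq {Z : Finset ℕ} (hZk : Z ⊆ Icc 1 k)
    (hZsym : kReflect k Z = Z) {x : ℕ} (hx : x ∈ Icc 1 k) :
    ∏ z ∈ Z, Nat.dist (k + 1 - x) z = ∏ z ∈ Z, Nat.dist x z := by
  conv_lhs => rw [← hZsym, prod_kReflect hZk]
  exact prod_congr rfl fun z hz =>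
    Nat.dist_sub_sub ((mem_Icc.mp hx).2.trans k.le_succ) ((mem_Icc.mp (hZk hz)).2.trans k.le_succ)

end Reflection

theorem delta1_symmetric_shuffle_general (k : ℕ) (X X' Z : Finset ℕ)
    (hX : X ⊆ Finset.Icc 1 k) (hX' : X' ⊆ Finset.Icc 1 k) (hZk : Z ⊆ Finset.Icc 1 k)
    (hU : X ∪ kReflect k X = X' ∪ kReflect k X')
    (hI : X ∩ kReflect k X = X' ∩ kReflect k X')
    (hZ : Disjoint Z (X ∪ kReflect k X))
    (hZsym : kReflect k Z = Z) :
    Delta1 (X' ∪ Z) * Delta1 X = Delta1 (X ∪ Z) * Delta1 X' := by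
  have hXZ : Disjoint X Z := (disjoint_union_right.mp hZ).1.symm
  have hX'Z : Disjoint X' Z := hZ.symm.mono_left (hU ▸ subset_union_left)
  have hcross : ∏ x ∈ X', ∏ z ∈ Z, Nat.dist x z = ∏ x ∈ X, ∏ z ∈ Z, Nat.dist x z :=
    (prod_eq_prod_of_shuffle (fun _ => prod_dist_reflect_of_kReflect_eq hZk hZsym) hX hX' hU hI).symm
  rw [Delta1_union hXZ, Delta1_union hX'Z, hcross]
  ring

/-- If `(X', X'_{(k)})` is a shuffling of `(X, X_{(k)})` and `Z ⊆ [k]` is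
k-symmetric and disjoint from `X ∪ X_{(k)}`, then
`Δ₁(X'∪Z)·Δ₁(X) = Δ₁(X∪Z)·Δ₁(X')`. -/
theorem delta1_symmetric_shuffle (k : ℕ) (hk : 0 < k) (X X' Z : Finset ℕ)
    (hX : X ⊆ Finset.Icc 1 k) (hX' : X' ⊆ Finset.Icc 1 k) (hZk : Z ⊆ Finset.Icc 1 k)
    (hU : X ∪ kReflect k X = X' ∪ kReflect k X')
    (hI : X ∩ kReflect k X = X' ∩ kReflect k X')
    (hZ : Disjoint Z (X ∪ kReflect k X))
    (hZsym : kReflect k Z = Z) :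
    Delta1 (X' ∪ Z) * Delta1 X = Delta1 (X ∪ Z) * Delta1 X' :=
  delta1_symmetric_shuffle_general k X X' Z hX hX' hZk hU hI hZ hZsym
end

section
/- Let k be a positive integer and X, X', Z ⊆ [k] with (X', X'_{(k)}) a shuffling of (X, X_{(k)}), Z disjoint from X ∪ X_{(k)}, and Z = Z_{(k)}. Then Δ₂(X, Z)·Δ₂(X_{(k)}, Z) = Δ₂(X', Z)·Δ₂(X'_{(k)}, Z), and moreover Δ₂(X_{(k)}, Z_{(k)}) = Δ₂(X, Z). -/
/-! A shuffling keeps the multiset `X + X_{(k)}` (its union and intersection), and `Δ₂(·, Z)` is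
multiplicative in its first argument, so `Δ₂(X, Z) Δ₂(X_{(k)}, Z)` only depends on that multiset.
The reflection `s ↦ k + 1 - s` is injective on `[k]` and preserves distances, hence `Δ₂`. -/

open Finset

/-- `Δ₂(S,T) = ∏_{s ∈ S, t ∈ T} |t - s|`. -/
def Delta2 (S T : Finset ℕ) : ℕ :=
  ∏ s ∈ S, ∏ t ∈ T, (max s t - min s t)

theorem Delta2_union_mul_inter (A B T : Finset ℕ) :
    Delta2 (A ∪ B) T * Delta2 (A ∩ B) T = Delta2 A T * Delta2 B T :=
  prod_union_inter

theorem Delta2_image_image {f : ℕ → ℕ} {S T : Finset ℕ} (hS : Set.InjOn f S)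
    (hT : Set.InjOn f T)
    (hf : ∀ s ∈ S, ∀ t ∈ T, max (f s) (f t) - min (f s) (f t) = max s t - min s t) :
    Delta2 (S.image f) (T.image f) = Delta2 S T := by
  rw [Delta2, prod_image hS]
  refine prod_congr rfl fun s hs => ?_
  rw [prod_image hT]
  exact prod_congr rfl (hf s hs)

theorem injOn_reflect (k : ℕ) : Set.InjOn (fun s => k + 1 - s) (Set.Iic (k + 1)) :=
  fun s hs t ht h => by simp only [Set.mem_Iic] at hs ht h; omega

theorem reflect_max_sub_min {k s t : ℕ} (hs : s ≤ k + 1) (ht : t ≤ k + 1) :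
    max (k + 1 - s) (k + 1 - t) - min (k + 1 - s) (k + 1 - t) = max s t - min s t := by
  omega

theorem Delta2_kReflect {k : ℕ} {S T : Finset ℕ} (hS : ∀ s ∈ S, s ≤ k + 1)
    (hT : ∀ t ∈ T, t ≤ k + 1) : Delta2 (kReflect k S) (kReflect k T) = Delta2 S T :=
  Delta2_image_image ((injOn_reflect k).mono hS) ((injOn_reflect k).mono hT)
    fun s hs t ht => reflect_max_sub_min (hS s hs) (hT t ht)

theorem delta2_symmetric_shuffle_pair_general (k : ℕ) (X X' Z : Finset ℕ)
    (hX : X ⊆ Finset.Icc 1 k) (hZk : Z ⊆ Finset.Icc 1 k)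
    (hU : X ∪ kReflect k X = X' ∪ kReflect k X')
    (hI : X ∩ kReflect k X = X' ∩ kReflect k X') :
    Delta2 X Z * Delta2 (kReflect k X) Z
        = Delta2 X' Z * Delta2 (kReflect k X') Z
      ∧ Delta2 (kReflect k X) (kReflect k Z) = Delta2 X Z := by
  have le_succ_of_subset {S : Finset ℕ} (hS : S ⊆ Icc 1 k) : ∀ s ∈ S, s ≤ k + 1 :=
    fun s hs => (mem_Icc.1 (hS hs)).2.trans k.le_succ
  refine ⟨?_, Delta2_kReflect (le_succ_of_subset hX) (le_succ_of_subset hZk)⟩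
  rw [← Delta2_union_mul_inter X, ← Delta2_union_mul_inter X', hU, hI]

/-- For a k-symmetric shuffling:
`Δ₂(X,Z)·Δ₂(X_{(k)},Z) = Δ₂(X',Z)·Δ₂(X'_{(k)},Z)` and
`Δ₂(X_{(k)},Z_{(k)}) = Δ₂(X,Z)`. -/
theorem delta2_symmetric_shuffle_pair (k : ℕ) (hk : 0 < k) (X X' Z : Finset ℕ)
    (hX : X ⊆ Finset.Icc 1 k) (hX' : X' ⊆ Finset.Icc 1 k) (hZk : Z ⊆ Finset.Icc 1 k)
    (hU : X ∪ kReflect k X = X' ∪ kReflect k X')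
    (hI : X ∩ kReflect k X = X' ∩ kReflect k X')
    (hZ : Disjoint Z (X ∪ kReflect k X))
    (hZsym : Z = kReflect k Z) :
    Delta2 X Z * Delta2 (kReflect k X) Z
        = Delta2 X' Z * Delta2 (kReflect k X') Z
      ∧ Delta2 (kReflect k X) (kReflect k Z) = Delta2 X Z :=
  delta2_symmetric_shuffle_pair_general k X X' Z hX hZk hU hI
end
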